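/- Let κ be an uncountable regular cardinal carrying a normal κ-complete nonprincipal ultrafilter U on κ. Then for every family F = {x_α : α < κ} of κ many subsets of κ, there exists a ⊆ κ of cardinality κ such that no x_α splits a. In particular, every splitting family on κ has cardinality at least κ⁺. -/

import Mathlib

/-!
For each `i` let `f i` be whichever of `x i`, `(x i)ᶜ` lies in `U`, and let `a` be the diagonal
intersection of the `f i`. Normality puts `a` in `U`, so `#a = κ` by completeness and
non-principality, while `a \ f i ⊆ Iic i` has size `< κ`; hence no `x i` splits `a`.
A family of at most `κ` sets can be indexed by `OT κ`, so it is not splitting.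
-/

open Cardinal

universe u

/-- The canonical type of order type `κ.ord`: ordinals below `κ.ord`. -/
abbrev OT (κ : Cardinal) := κ.ord.ToType

def Splits {α : Type*} (κ : Cardinal) (x a : Set α) : Prop :=
  #↥(a ∩ x) = κ ∧ #↥(a \ x) = κ

def diagInter {α : Type*} [Preorder α] (f : α → Set α) : Set α :=
  {β | ∀ γ, γ < β → β ∈ f γ}

lemma diagInter_diff_subset_Iic {α : Type*} [LinearOrder α] (f : α → Set α) (i : α) :
    diagInter f \ f i ⊆ Set.Iic i := fun _ ⟨hβ, hβi⟩ =>
  not_lt.1 fun hlt => hβi (hβ i hlt)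

lemma mk_Iic_OT_lt {κ : Cardinal} (hκ : ℵ₀ ≤ κ) (i : OT κ) : #(Set.Iic i) < κ := by
  have hIio : #(Set.Iio i) < κ := by simpa using mk_Iio_lt i (by simp)
  calc #(Set.Iic i) = #(insert i (Set.Iio i) : Set (OT κ)) := by rw [Set.Iio_insert]
    _ ≤ #(Set.Iio i) + 1 := mk_insert_le
    _ < κ := add_lt_of_lt hκ hIio (one_lt_aleph0.trans_le hκ)

section CompleteUltrafilter

variable {α : Type*} {κ : Cardinal} (U : Ultrafilter α)
  (hcomp : ∀ s : Set (Set α), #↥s < κ → (∀ x ∈ s, x ∈ U) → ⋂₀ s ∈ U)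
  (hnp : ∀ b : α, ({b} : Set α) ∉ U)
include hcomp hnp

lemma Ultrafilter.notMem_of_mk_lt {s : Set α} (hs : #↥s < κ) : s ∉ U := by
  have hcompl : ⋂₀ ((fun b => ({b} : Set α)ᶜ) '' s) ∈ U :=
    hcomp _ (mk_image_le.trans_lt hs) (by
      rintro _ ⟨b, -, rfl⟩
      exact Ultrafilter.compl_mem_iff_notMem.2 (hnp b))
  have hsInter : ⋂₀ ((fun b => ({b} : Set α)ᶜ) '' s) = sᶜ := by ext; simp; grind
  rw [hsInter] at hcompl
  exact Ultrafilter.compl_mem_iff_notMem.1 hcompl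

lemma Ultrafilter.mk_eq_of_mem (hα : #α = κ) {s : Set α} (hs : s ∈ U) : #↥s = κ :=
  (hα ▸ mk_set_le s).eq_of_not_lt fun hlt => U.notMem_of_mk_lt hcomp hnp hlt hs

end CompleteUltrafilter

lemma exists_unsplit_of_normal {α : Type*} [LinearOrder α] {κ : Cardinal}
    (U : Ultrafilter α) (hnormal : ∀ f : α → Set α, (∀ i, f i ∈ U) → diagInter f ∈ U)
    (hmk : ∀ s ∈ U, #↥s = κ) (hIic : ∀ i : α, #(Set.Iic i) < κ) (x : α → Set α) :
    ∃ a : Set α, #↥a = κ ∧ ∀ i, ¬ Splits κ (x i) a := by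
  classical
  let f : α → Set α := fun i => if x i ∈ U then x i else (x i)ᶜ
  have hfU : ∀ i, f i ∈ U := fun i => by
    by_cases h : x i ∈ U
    · simp [f, h]
    · simpa [f, h] using Ultrafilter.compl_mem_iff_notMem.2 h
  refine ⟨diagInter f, hmk _ (hnormal f hfU), fun i ⟨hin, hout⟩ => ?_⟩
  have hsmall : #↥(diagInter f \ f i) < κ :=
    (mk_le_mk_of_subset (diagInter_diff_subset_Iic f i)).trans_lt (hIic i)
  by_cases h : x i ∈ U
  · simp only [f, h, if_true] at hsmall
    exact hsmall.ne hout
  · simp only [f, h, if_false, Set.sdiff_compl] at hsmall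
    exact hsmall.ne hin

lemma mk_lt_of_forall_exists_unsplit {α ι : Type u} {κ : Cardinal}
    (hunsplit : ∀ x : ι → Set α, ∃ a : Set α, #↥a = κ ∧ ∀ i, ¬ Splits κ (x i) a)
    (F : Set (Set α)) (hF : ∀ a : Set α, #↥a = κ → ∃ y ∈ F, Splits κ y a) :
    #ι < #↥F := by
  by_contra! hle
  obtain ⟨g⟩ := hle
  let x : ι → Set α := Function.extend g Subtype.val fun _ => ∅
  obtain ⟨a, ha, hnot⟩ := hunsplit x
  obtain ⟨y, hy, hsplit⟩ := hF a ha
  exact hnot (g ⟨y, hy⟩) (by simpa [x, g.injective.extend_apply] using hsplit)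

theorem normal_measure_unsplit_kappa_family_general (κ : Cardinal)
    (hun : ℵ₀ < κ)
    (U : Ultrafilter (OT κ))
    (hcomp : ∀ s : Set (Set (OT κ)), #↥s < κ → (∀ x ∈ s, x ∈ U) → ⋂₀ s ∈ U)
    (hnp : ∀ b : OT κ, ({b} : Set (OT κ)) ∉ U)
    (hnormal : ∀ f : OT κ → Set (OT κ), (∀ i, f i ∈ U) →
      {β : OT κ | ∀ γ, γ < β → β ∈ f γ} ∈ U)
    (x : OT κ → Set (OT κ)) :
    (∃ a : Set (OT κ), #↥a = κ ∧
        ∀ i : OT κ, ¬ (#↥(a ∩ x i) = κ ∧ #↥(a \ x i) = κ)) ∧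
      ∀ F : Set (Set (OT κ)),
        (∀ a : Set (OT κ), #↥a = κ → ∃ y ∈ F, #↥(a ∩ y) = κ ∧ #↥(a \ y) = κ) →
        Order.succ κ ≤ #↥F := by
  have hunsplit : ∀ x : OT κ → Set (OT κ), ∃ a : Set (OT κ), #↥a = κ ∧
      ∀ i, ¬ Splits κ (x i) a :=
    exists_unsplit_of_normal U hnormal (fun _ => U.mk_eq_of_mem hcomp hnp (mk_ord_toType κ))
      (mk_Iic_OT_lt hun.le)
  refine ⟨hunsplit x, fun F hF => Order.succ_le_of_lt ?_⟩
  simpa using mk_lt_of_forall_exists_unsplit hunsplit F hF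

theorem normal_measure_unsplit_kappa_family (κ : Cardinal)
    (hreg : κ.IsRegular) (hun : ℵ₀ < κ)
    (U : Ultrafilter (OT κ))
    (hcomp : ∀ s : Set (Set (OT κ)), #↥s < κ → (∀ x ∈ s, x ∈ U) → ⋂₀ s ∈ U)
    (hnp : ∀ b : OT κ, ({b} : Set (OT κ)) ∉ U)
    (hnormal : ∀ f : OT κ → Set (OT κ), (∀ i, f i ∈ U) →
      {β : OT κ | ∀ γ, γ < β → β ∈ f γ} ∈ U)
    (x : OT κ → Set (OT κ)) :
    (∃ a : Set (OT κ), #↥a = κ ∧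
        ∀ i : OT κ, ¬ (#↥(a ∩ x i) = κ ∧ #↥(a \ x i) = κ)) ∧
      ∀ F : Set (Set (OT κ)),
        (∀ a : Set (OT κ), #↥a = κ → ∃ y ∈ F, #↥(a ∩ y) = κ ∧ #↥(a \ y) = κ) →
        Order.succ κ ≤ #↥F :=
  normal_measure_unsplit_kappa_family_general κ hun U hcomp hnp hnormal x
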